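/- Let Q be a smooth manifold, ϑ a closed one-form on Q, θ := π_Q*ϑ, and Ω_θ^κ := (π^κ)*(−dΘ_Q + (π_Q*ϑ)∧Θ_Q) the two-forms of the locally conformal k-symplectic manifold T_{k,θ}*Q. For any section γ = (γ^1,…,γ^k) of the projection π_Q : T_{k,θ}*Q → Q one has γ*Ω_θ^κ = (γ^κ)*Ω_θ = −d_ϑγ^κ = −(dγ^κ − ϑ∧γ^κ) for each κ. Consequently, the image of γ is a Lagrangian submanifold of T_{k,θ}*Q if and only if d_ϑγ^κ = 0 for all κ = 1,…,k. -/

import Mathlib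

noncomputable section

open scoped BigOperators

variable {E F : Type*} [NormedAddCommGroup E] [NormedSpace ℝ E]
  [NormedAddCommGroup F] [NormedSpace ℝ F]

/-- The exterior derivative of a smooth function, as a one-form. -/
def extDer0 (f : E → ℝ) : E → E → ℝ := fun x v => fderiv ℝ f x v

/-- The exterior derivative of a one-form. -/
def extDer1 (α : E → E → ℝ) : E → E → E → ℝ := fun x u v =>
  fderiv ℝ (fun y => α y v) x u - fderiv ℝ (fun y => α y u) x v

/-- The exterior derivative of a two-form. -/
def extDer2 (ω : E → E → E → ℝ) : E → E → E → E → ℝ := fun x u v w =>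
  fderiv ℝ (fun y => ω y v w) x u - fderiv ℝ (fun y => ω y u w) x v +
    fderiv ℝ (fun y => ω y u v) x w

/-- Wedge product of two one-forms. -/
def wedge11 (α β : E → E → ℝ) : E → E → E → ℝ := fun x u v =>
  α x u * β x v - α x v * β x u

/-- Wedge product of a one-form with a two-form. -/
def wedge12 (θ : E → E → ℝ) (ω : E → E → E → ℝ) : E → E → E → E → ℝ := fun x u v w =>
  θ x u * ω x v w - θ x v * ω x u w + θ x w * ω x u v

/-- Pullback of a one-form along a smooth map. -/
def pb1 (φ : E → F) (α : F → F → ℝ) : E → E → ℝ := fun x v => α (φ x) (fderiv ℝ φ x v)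

/-- Pullback of a two-form along a smooth map. -/
def pb2 (φ : E → F) (ω : F → F → F → ℝ) : E → E → E → ℝ := fun x u v =>
  ω (φ x) (fderiv ℝ φ x u) (fderiv ℝ φ x v)

/-- Model for the cotangent bundle `T*Q` of the manifold `Q = E`. -/
abbrev Cot (E : Type*) [NormedAddCommGroup E] [NormedSpace ℝ E] := E × (E →L[ℝ] ℝ)

/-- The tautological (canonical) one-form `Θ_Q` on `T*Q`. -/
def taut : Cot E → Cot E → ℝ := fun z v => z.2 v.1

/-- The canonical symplectic two-form `Ω_Q = -dΘ_Q` on `T*Q`. -/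
def canSymp : Cot E → Cot E → Cot E → ℝ := fun z u v => -(extDer1 taut z u v)
/-- The almost symplectic two-form `Ω_θ = -dΘ_Q + (π_Q*ϑ) ∧ Θ_Q` on `T*Q`,
for the Lee form `θ = π_Q*ϑ`. -/
def lcsForm (ϑ : E → E →L[ℝ] ℝ) : Cot E → Cot E → Cot E → ℝ := fun z u v =>
  canSymp z u v + (ϑ z.1 u.1 * taut z v - ϑ z.1 v.1 * taut z u)
/-- Model for the `k`-cotangent bundle `T_k*Q = T*Q ⊕_Q ⋯ ⊕_Q T*Q` of `Q = E`. -/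
abbrev kCot (E : Type*) [NormedAddCommGroup E] [NormedSpace ℝ E] (k : ℕ) :=
  E × (Fin k → E →L[ℝ] ℝ)

/-- The projection `π^κ : T_k*Q → T*Q` onto the `κ`-th summand. -/
def kproj {k : ℕ} (κ : Fin k) : kCot E k → Cot E := fun z => (z.1, z.2 κ)

/-- The canonical two-forms `Ω^κ = (π^κ)*Ω_Q` on `T_k*Q`
(`π^κ` is linear, so its pullback is plain composition). -/
def kForm {k : ℕ} (κ : Fin k) : kCot E k → kCot E k → kCot E k → ℝ :=
  fun z u v => canSymp (kproj κ z) (kproj κ u) (kproj κ v)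
/-- The two-forms `Ω_θ^κ = (π^κ)*Ω_θ` of the locally conformal `k`-symplectic
structure on `T_{k,θ}*Q`. -/
def lcksForm (ϑ : E → E →L[ℝ] ℝ) {k : ℕ} (κ : Fin k) :
    kCot E k → kCot E k → kCot E k → ℝ :=
  fun z u v => lcsForm ϑ (kproj κ z) (kproj κ u) (kproj κ v)
/-- The `k`-symplectic orthogonal of a set `S` of tangent vectors at `z`, with respect
to a family of two-forms `Ω^κ`. -/
def kPerp {k : ℕ} (Ω : Fin k → kCot E k → kCot E k → kCot E k → ℝ) (z : kCot E k)
    (S : Set (kCot E k)) : Set (kCot E k) :=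
  {v | ∀ w ∈ S, ∀ κ, Ω κ z v w = 0}


/-! In the coordinates `z = (q, p)` of `T*Q` the form `Ω_θ` reads
`Ω_θ z u v = v_p u_q - u_p v_q + ϑ(u_q) p(v_q) - ϑ(v_q) p(u_q)`, so evaluating it on the tangent
vectors `(u, dγ^κ u)`, `(v, dγ^κ v)` of a section gives `-(dγ^κ - ϑ ∧ γ^κ)(u, v)` pointwise.
Hence the image of `γ` is isotropic iff every `d_ϑγ^κ` vanishes. It is then Lagrangian: the same
formula shows that a vector `V` orthogonal to the image has vertical part `dγ V_q`, so it is
tangent to the image. -/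

theorem fderiv_graph_apply {G : Type*} [NormedAddCommGroup G] [NormedSpace ℝ G] {f : E → G}
    {q : E} (hf : DifferentiableAt ℝ f q) (u : E) :
    fderiv ℝ (fun x => (x, f x)) q u = (u, fderiv ℝ f q u) := by
  have hgraph : HasFDerivAt (fun x => (x, f x))
      ((ContinuousLinearMap.id ℝ E).prod (fderiv ℝ f q)) q :=
    (hasFDerivAt_id q).prodMk hf.hasFDerivAt
  rw [hgraph.fderiv]
  rfl

theorem extDer1_eq_of_differentiableAt {α : E → E →L[ℝ] ℝ} {x : E}
    (hα : DifferentiableAt ℝ α x) (u v : E) :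
    extDer1 (fun y w => α y w) x u v = fderiv ℝ α x u v - fderiv ℝ α x v u := by
  simp [extDer1, fderiv_clm_apply hα (differentiableAt_const _)]

theorem canSymp_apply (z u v : Cot E) : canSymp z u v = v.2 u.1 - u.2 v.1 := by
  have hderiv_taut (w : Cot E) : fderiv ℝ (fun y : Cot E => taut y w) z =
      (ContinuousLinearMap.apply ℝ ℝ w.1).comp (ContinuousLinearMap.snd ℝ E (E →L[ℝ] ℝ)) :=
    ((ContinuousLinearMap.apply ℝ ℝ w.1).comp (ContinuousLinearMap.snd ℝ E _)).fderiv
  simp [canSymp, extDer1, hderiv_taut]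

theorem lcsForm_apply (ϑ : E → E →L[ℝ] ℝ) (z u v : Cot E) :
    lcsForm ϑ z u v = v.2 u.1 - u.2 v.1 + (ϑ z.1 u.1 * z.2 v.1 - ϑ z.1 v.1 * z.2 u.1) := by
  rw [lcsForm, canSymp_apply]
  rfl

theorem pb2_graph_lcsForm (ϑ : E → E →L[ℝ] ℝ) {α : E → E →L[ℝ] ℝ} {q : E}
    (hα : DifferentiableAt ℝ α q) (u v : E) :
    pb2 (fun x => ((x, α x) : Cot E)) (lcsForm ϑ) q u v
      = -(extDer1 (fun y w => α y w) q u v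
          - wedge11 (fun y w => ϑ y w) (fun y w => α y w) q u v) := by
  simp only [pb2, fderiv_graph_apply hα, lcsForm_apply, extDer1_eq_of_differentiableAt hα,
    wedge11]
  ring

variable {k : ℕ}

theorem pb2_graph_lcksForm_apply (ϑ : E → E →L[ℝ] ℝ) {γ : E → Fin k → E →L[ℝ] ℝ} {q : E}
    (hγ : DifferentiableAt ℝ γ q) (κ : Fin k) (u v : E) :
    pb2 (fun x => ((x, γ x) : kCot E k)) (lcksForm ϑ κ) q u v
      = lcsForm ϑ (q, γ q κ) (u, fderiv ℝ γ q u κ) (v, fderiv ℝ γ q v κ) := by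
  simp only [pb2, fderiv_graph_apply hγ]
  rfl

theorem pb2_graph_lcksForm (ϑ : E → E →L[ℝ] ℝ) {γ : E → Fin k → E →L[ℝ] ℝ} {q : E}
    (hγ : DifferentiableAt ℝ γ q) (κ : Fin k) (u v : E) :
    pb2 (fun x => ((x, γ x) : kCot E k)) (lcksForm ϑ κ) q u v
      = pb2 (fun x => ((x, γ x κ) : Cot E)) (lcsForm ϑ) q u v := by
  have hγκ : DifferentiableAt ℝ (fun x => γ x κ) q := differentiableAt_pi.1 hγ κ
  rw [pb2_graph_lcksForm_apply ϑ hγ]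
  simp only [pb2, fderiv_graph_apply hγκ, fderiv_apply hγ]
  rfl

theorem kPerp_range_fderiv_graph_eq_iff (ϑ : E → E →L[ℝ] ℝ) {γ : E → Fin k → E →L[ℝ] ℝ}
    {q : E} (hγ : DifferentiableAt ℝ γ q) :
    kPerp (fun κ => lcksForm ϑ κ) (q, γ q)
        (Set.range (fderiv ℝ (fun x => ((x, γ x) : kCot E k)) q))
      = Set.range (fderiv ℝ (fun x => ((x, γ x) : kCot E k)) q) ↔
    ∀ κ u v, pb2 (fun x => ((x, γ x) : kCot E k)) (lcksForm ϑ κ) q u v = 0 := by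
  have hrange : Set.range (fderiv ℝ (fun x => ((x, γ x) : kCot E k)) q)
      = Set.range fun u => (u, fderiv ℝ γ q u) :=
    congrArg Set.range (funext (fderiv_graph_apply hγ))
  simp only [hrange, pb2_graph_lcksForm_apply ϑ hγ]
  constructor
  · intro hLag κ u v
    have hu : (u, fderiv ℝ γ q u) ∈ kPerp (fun κ => lcksForm ϑ κ) (q, γ q)
        (Set.range fun u => (u, fderiv ℝ γ q u)) := by
      rw [hLag]
      exact ⟨u, rfl⟩
    exact hu _ ⟨v, rfl⟩ κ
  · intro hIso
    ext V
    constructor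
    · intro hV
      have hvertical (κ : Fin k) (u : E) : V.2 κ u = fderiv ℝ γ q V.1 κ u := by
        have hVu := hV _ ⟨u, rfl⟩ κ
        have hIso' := hIso κ V.1 u
        simp only [lcksForm, kproj, lcsForm_apply] at hVu hIso'
        linarith
      refine ⟨V.1, Prod.ext rfl (funext fun κ => ?_)⟩
      exact ContinuousLinearMap.ext fun u => (hvertical κ u).symm
    · rintro ⟨u, rfl⟩ _ ⟨v, rfl⟩ κ
      exact hIso κ u v

theorem section_pullback_lcks_general
    {k : ℕ}
    (ϑ : E → E →L[ℝ] ℝ)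
    (γ : E → Fin k → E →L[ℝ] ℝ) (hγs : ContDiff ℝ (⊤ : ℕ∞) γ)
    (Γ : E → kCot E k) (hΓ : ∀ q, Γ q = (q, γ q)) :
    (∀ (κ : Fin k) q u v,
      pb2 Γ (lcksForm ϑ κ) q u v
          = pb2 (fun x => ((x, γ x κ) : Cot E)) (lcsForm ϑ) q u v ∧
      pb2 Γ (lcksForm ϑ κ) q u v
          = -(extDer1 (fun y w => γ y κ w) q u v
              - wedge11 (fun y w => ϑ y w) (fun y w => γ y κ w) q u v)) ∧
    ((∀ q, kPerp (fun κ : Fin k => lcksForm ϑ κ) (Γ q)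
        (Set.range (fderiv ℝ Γ q)) = Set.range (fderiv ℝ Γ q)) ↔
      (∀ (κ : Fin k) q u v,
        extDer1 (fun y w => γ y κ w) q u v
          - wedge11 (fun y w => ϑ y w) (fun y w => γ y κ w) q u v = 0)) := by
  have hγ : Differentiable ℝ γ := hγs.differentiable (by simp)
  obtain rfl : Γ = fun x => (x, γ x) := funext hΓ
  have hpullback (κ : Fin k) (q u v : E) := pb2_graph_lcksForm ϑ (hγ q) κ u v
  have hformula (κ : Fin k) (q u v : E) :=
    (hpullback κ q u v).trans (pb2_graph_lcsForm ϑ (differentiable_pi.1 hγ κ q) u v)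
  refine ⟨fun κ q u v => ⟨hpullback κ q u v, hformula κ q u v⟩, ?_⟩
  simp only [kPerp_range_fderiv_graph_eq_iff ϑ (hγ _), hformula, neg_eq_zero]
  exact ⟨fun h κ q => h q κ, fun h q κ => h κ q⟩

/-- For a section `γ = (γ^1,…,γ^k)` of `π_Q : T_{k,θ}*Q → Q`
(realized as `Γ q = (q, γ q)`) one has
`γ*Ω_θ^κ = (γ^κ)*Ω_θ = -d_ϑγ^κ = -(dγ^κ - ϑ∧γ^κ)` for each `κ`; consequently the
image of `γ` is a Lagrangian submanifold of `T_{k,θ}*Q` iff `d_ϑγ^κ = 0` for all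
`κ`. -/
theorem section_pullback_lcks
    [FiniteDimensional ℝ E] {k : ℕ}
    (ϑ : E → E →L[ℝ] ℝ) (hϑs : ContDiff ℝ (⊤ : ℕ∞) ϑ)
    (hϑc : ∀ x u v, extDer1 (fun y w => ϑ y w) x u v = 0)
    (γ : E → Fin k → E →L[ℝ] ℝ) (hγs : ContDiff ℝ (⊤ : ℕ∞) γ)
    (Γ : E → kCot E k) (hΓ : ∀ q, Γ q = (q, γ q)) :
    (∀ (κ : Fin k) q u v,
      pb2 Γ (lcksForm ϑ κ) q u v
          = pb2 (fun x => ((x, γ x κ) : Cot E)) (lcsForm ϑ) q u v ∧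
      pb2 Γ (lcksForm ϑ κ) q u v
          = -(extDer1 (fun y w => γ y κ w) q u v
              - wedge11 (fun y w => ϑ y w) (fun y w => γ y κ w) q u v)) ∧
    ((∀ q, kPerp (fun κ : Fin k => lcksForm ϑ κ) (Γ q)
        (Set.range (fderiv ℝ Γ q)) = Set.range (fderiv ℝ Γ q)) ↔
      (∀ (κ : Fin k) q u v,
        extDer1 (fun y w => γ y κ w) q u v
          - wedge11 (fun y w => ϑ y w) (fun y w => γ y κ w) q u v = 0)) :=
  section_pullback_lcks_general ϑ γ hγs Γ hΓ
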